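/- If (C₀,C₁) is an equitable 2-partition of the halved n-cube with quotient matrix [[a,b],[c,d]], then (b+c)/gcd(b,c) divides 2^{n−1}; in particular (b+c)/gcd(b,c) is a power of 2. -/

import Mathlib

open Finset

/-- The hypercube graph on binary words indexed by `ι`. -/
def cube (ι : Type*) [Fintype ι] [DecidableEq ι] : SimpleGraph (ι → ZMod 2) where
  Adj x y := hammingDist x y = 1
  symm := ⟨fun (x y : ι → ZMod 2) h => (hammingDist_comm y x).trans h⟩
  loopless := ⟨fun x h => absurd ((hammingDist_self x).symm.trans h) (by decide)⟩

instance (ι : Type*) [Fintype ι] [DecidableEq ι] : DecidableRel (cube ι).Adj :=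
  fun x y => inferInstanceAs (Decidable (hammingDist x y = 1))

/-- The halved hypercube: even-weight words, adjacent iff Hamming distance 2. -/
def halvedCube (ι : Type*) [Fintype ι] [DecidableEq ι] :
    SimpleGraph {x : ι → ZMod 2 // Even (hammingDist x 0)} where
  Adj x y := hammingDist x.1 y.1 = 2
  symm := ⟨fun (x y : {x : ι → ZMod 2 // Even (hammingDist x 0)}) h =>
    (hammingDist_comm y.1 x.1).trans h⟩
  loopless := ⟨fun x h => absurd ((hammingDist_self x.1).symm.trans h) (by decide)⟩

instance (ι : Type*) [Fintype ι] [DecidableEq ι] : DecidableRel (halvedCube ι).Adj :=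
  fun x y => inferInstanceAs (Decidable (hammingDist x.1 y.1 = 2))

variable {V : Type*} [Fintype V] [DecidableEq V]

/-- Number of neighbors of `v` in the set `C`. -/
def nbrCount (G : SimpleGraph V) [DecidableRel G.Adj] (v : V) (C : Finset V) : ℕ :=
  (C.filter (G.Adj v)).card

/-- `(C0, C1)` is an equitable 2-partition with quotient matrix `[[a,b],[c,d]]`. -/
def IsEquitable2 (G : SimpleGraph V) [DecidableRel G.Adj] (C0 C1 : Finset V)
    (a b c d : ℕ) : Prop :=
  Disjoint C0 C1 ∧ C0 ∪ C1 = Finset.univ ∧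
  (∀ v ∈ C0, nbrCount G v C0 = a ∧ nbrCount G v C1 = b) ∧
  (∀ v ∈ C1, nbrCount G v C0 = c ∧ nbrCount G v C1 = d)

/-- `C` is an equitable `k`-partition with quotient matrix `S`. -/
def IsEquitableK (G : SimpleGraph V) [DecidableRel G.Adj] {k : ℕ}
    (C : V → Fin k) (S : Fin k → Fin k → ℕ) : Prop :=
  ∀ (v : V) (j : Fin k),
    (Finset.univ.filter (fun w => G.Adj v w ∧ C w = j)).card = S (C v) j

/-!
Double counting the edges between the two cells gives `|C₀| b = |C₁| c`. Writing `b = g b'`,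
`c = g c'` with `g = gcd b c`, this becomes `|C₀| b' = |C₁| c'`, so `b' + c'` divides
`c' (|C₀| + |C₁|) = c' 2^(n-1)` and, being coprime to `c'`, divides `2^(n-1)`. Dividing by `g`
is only meaningful when `g ≠ 0`; indeed `b ≠ 0` because the halved cube is connected: two
words of even weight are joined by a path that corrects two differing coordinates at a time.
-/

open Function

section Hamming

variable {ι : Type*} [Fintype ι]

theorem ZMod.natCast_hammingNorm (x : ι → ZMod 2) : (hammingNorm x : ZMod 2) = ∑ i, x i := by
  rw [hammingNorm, card_filter, Nat.cast_sum]
  refine sum_congr rfl fun i _ => ?_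
  generalize x i = a
  fin_cases a <;> rfl

theorem even_hammingDist_iff_sum_eq (x y : ι → ZMod 2) :
    Even (hammingDist x y) ↔ ∑ i, x i = ∑ i, y i := by
  rw [← ZMod.natCast_eq_zero_iff_even, hammingDist_eq_hammingNorm, ZMod.natCast_hammingNorm]
  simp only [Pi.add_apply, Pi.neg_apply, sum_add_distrib, sum_neg_distrib, neg_add_eq_zero]

theorem even_hammingDist_zero_iff (x : ι → ZMod 2) :
    Even (hammingDist x 0) ↔ ∑ i, x i = 0 := by
  rw [even_hammingDist_iff_sum_eq]
  simp

theorem even_hammingDist_of_even_hammingDist_zero {x y : ι → ZMod 2}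
    (hx : Even (hammingDist x 0)) (hy : Even (hammingDist y 0)) : Even (hammingDist x y) := by
  rw [even_hammingDist_zero_iff] at hx hy
  rw [even_hammingDist_iff_sum_eq, hx, hy]

variable [DecidableEq ι] {β : ι → Type*} [∀ i, DecidableEq (β i)]

theorem hammingDist_update_self_le (x : ∀ i, β i) (i : ι) (a : β i) :
    hammingDist x (update x i a) ≤ 1 := by
  refine (card_le_card fun j hj => ?_).trans (card_singleton i).le
  by_contra hji
  exact (mem_filter.mp hj).2 (update_of_ne (mt mem_singleton.mpr hji) a x).symm

theorem hammingDist_update_add_one {x y : ∀ i, β i} {i : ι} (h : x i ≠ y i) :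
    hammingDist (update x i (y i)) y + 1 = hammingDist x y := by
  have hfilter : ({j | update x i (y i) j ≠ y j} : Finset ι) =
      ({j | x j ≠ y j} : Finset ι).erase i := by
    ext j
    rcases eq_or_ne j i with rfl | hji <;> simp [*]
  rw [hammingDist, hfilter, card_erase_add_one (by simpa using h), hammingDist]

theorem exists_hammingDist_eq_two {x y : ∀ i, β i} (h : 2 ≤ hammingDist x y) :
    ∃ z, hammingDist x z = 2 ∧ hammingDist z y + 2 = hammingDist x y := by
  obtain ⟨i, hi, j, hj, hij⟩ := one_lt_card.mp h
  rw [mem_filter] at hi hj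
  set x₁ := update x i (y i)
  have hx₁j : x₁ j ≠ y j := by simpa [x₁, update_of_ne hij.symm] using hj.2
  have h₁ : hammingDist x₁ y + 1 = hammingDist x y := hammingDist_update_add_one hi.2
  have h₂ := hammingDist_update_add_one hx₁j
  refine ⟨update x₁ j (y j), ?_, by omega⟩
  have hle : hammingDist x (update x₁ j (y j)) ≤ 2 := calc
    _ ≤ hammingDist x x₁ + hammingDist x₁ (update x₁ j (y j)) := hammingDist_triangle _ _ _
    _ ≤ 1 + 1 := add_le_add (hammingDist_update_self_le _ _ _) (hammingDist_update_self_le _ _ _)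
  have := hammingDist_triangle x (update x₁ j (y j)) y
  omega

end Hamming

section HalvedCube

variable {ι : Type*} [Fintype ι] [DecidableEq ι]

theorem card_even_hammingDist_zero :
    Fintype.card {x : ι → ZMod 2 // Even (hammingDist x 0)} = 2 ^ (Fintype.card ι - 1) := by
  rcases isEmpty_or_nonempty ι with hι | hι
  · rw [Fintype.card_eq_zero (α := ι), zero_tsub, pow_zero, Fintype.card_eq_one_iff]
    exact ⟨⟨0, by simp⟩, fun x => Subtype.ext (Subsingleton.elim _ _)⟩
  let σ : (ι → ZMod 2) →+ ZMod 2 :=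
    AddMonoidHom.mk' (fun x => ∑ i, x i) fun _ _ => sum_add_distrib
  have hσ : Surjective σ := fun a => ⟨Pi.single (Classical.arbitrary ι) a, by simp [σ]⟩
  have hker : Nat.card σ.ker * 2 = 2 ^ Fintype.card ι := by
    have := σ.ker.card_mul_index
    rw [Fintype.card_eq_nat_card]
    rwa [AddSubgroup.index_ker σ, AddMonoidHom.range_eq_top.2 hσ, AddSubgroup.card_top,
      Nat.card_zmod, Nat.card_fun, Nat.card_zmod] at this
  have hcard : Fintype.card {x : ι → ZMod 2 // Even (hammingDist x 0)} = Nat.card σ.ker :=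
    Nat.card_eq_fintype_card.symm.trans <| Nat.card_congr <| Equiv.subtypeEquivRight fun x =>
      (even_hammingDist_zero_iff x).trans (AddMonoidHom.mem_ker (f := σ)).symm
  rw [hcard]
  refine Nat.eq_of_mul_eq_mul_right two_pos ?_
  rw [hker, pow_sub_one_mul Fintype.card_ne_zero]

theorem halvedCube_preconnected : (halvedCube ι).Preconnected := by
  suffices ∀ k (x y : {x : ι → ZMod 2 // Even (hammingDist x 0)}),
      hammingDist x.1 y.1 = k → (halvedCube ι).Reachable x y from fun x y => this _ x y rfl
  intro k
  induction k using Nat.strong_induction_on with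
  | _ k ih =>
  intro x y hk
  obtain rfl | hxy := eq_or_ne x y
  · rfl
  have h2 : 2 ≤ k := by
    obtain ⟨m, hm⟩ := even_hammingDist_of_even_hammingDist_zero x.2 y.2
    have : k ≠ 0 := hk ▸ hammingDist_ne_zero.2 (Subtype.val_injective.ne hxy)
    omega
  obtain ⟨z, hxz, hzy⟩ := exists_hammingDist_eq_two (hk ▸ h2 : 2 ≤ hammingDist x.1 y.1)
  have hz : Even (hammingDist z 0) := by
    have hsum := (even_hammingDist_iff_sum_eq x.1 z).1 (by rw [hxz]; exact even_two)
    rw [even_hammingDist_zero_iff, ← hsum, ← even_hammingDist_zero_iff]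
    exact x.2
  exact (SimpleGraph.Adj.reachable (show (halvedCube ι).Adj x ⟨z, hz⟩ from hxz)).trans
    (ih (hammingDist z y.1) (by omega) _ _ rfl)

end HalvedCube

namespace IsEquitable2

variable {G : SimpleGraph V} [DecidableRel G.Adj] {C0 C1 : Finset V} {a b c d : ℕ}

theorem card_add_card (h : IsEquitable2 G C0 C1 a b c d) : #C0 + #C1 = Fintype.card V := by
  rw [← card_union_of_disjoint h.1, h.2.1, card_univ]

theorem card_mul_eq_card_mul (h : IsEquitable2 G C0 C1 a b c d) : #C0 * b = #C1 * c :=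
  Finset.card_mul_eq_card_mul G.Adj (fun v hv => (h.2.2.1 v hv).2) fun w hw => by
    simpa [bipartiteBelow, nbrCount, G.adj_comm] using (h.2.2.2 w hw).1

theorem ne_zero_of_preconnected (h : IsEquitable2 G C0 C1 a b c d) (hG : G.Preconnected)
    (h0 : C0.Nonempty) (h1 : C1.Nonempty) : b ≠ 0 := by
  obtain ⟨hdisj, hcover, hC0, -⟩ := h
  obtain ⟨v, hv⟩ := h0
  obtain ⟨w, hw⟩ := h1
  obtain ⟨e, -, he0, hnot0⟩ := (hG v w).some.exists_boundary_dart (C0 : Set V) hv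
    fun hw0 => disjoint_left.1 hdisj hw0 hw
  have he1 : e.snd ∈ C1 := by
    have := mem_univ e.snd
    rw [← hcover, mem_union] at this
    exact this.resolve_left hnot0
  rw [← (hC0 _ he0).2]
  exact (card_pos.2 ⟨e.snd, mem_filter.2 ⟨he1, e.adj⟩⟩).ne'

end IsEquitable2

theorem Nat.add_div_gcd_dvd_add {b c x y : ℕ} (hb : b ≠ 0) (h : x * b = y * c) :
    (b + c) / b.gcd c ∣ x + y := by
  obtain ⟨b', c', hcop, hb', hc'⟩ := Nat.exists_coprime b c
  set g := b.gcd c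
  have hg : 0 < g := Nat.gcd_pos_of_pos_left c (Nat.pos_of_ne_zero hb)
  have hquot : (b + c) / g = b' + c' := by
    rw [hb', hc', ← add_mul, Nat.mul_div_cancel _ hg]
  have h' : x * b' = y * c' := by
    refine Nat.eq_of_mul_eq_mul_right hg ?_
    rw [mul_assoc, mul_assoc, ← hb', ← hc', h]
  rw [hquot]
  refine (Nat.coprime_add_self_left.2 hcop).dvd_of_dvd_mul_left (Dvd.intro x ?_)
  calc (b' + c') * x = x * b' + c' * x := by ring
    _ = c' * (x + y) := by rw [h']; ring

/-- if `(C₀,C₁)` is an equitable 2-partition of the halved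
`n`-cube (with nonempty cells) and quotient matrix `[[a,b],[c,d]]`, then
`(b+c)/gcd(b,c)` divides `2^{n-1}`; in particular it is a power of 2. -/
theorem stmt18 (n : ℕ) (a b c d : ℕ)
    (C0 C1 : Finset {x : Fin n → ZMod 2 // Even (hammingDist x 0)})
    (h0 : C0.Nonempty) (h1 : C1.Nonempty)
    (hEq : IsEquitable2 (halvedCube (Fin n)) C0 C1 a b c d) :
    ((b + c) / Nat.gcd b c) ∣ 2 ^ (n - 1) ∧ ∃ m : ℕ, (b + c) / Nat.gcd b c = 2 ^ m := by
  have hb : b ≠ 0 := hEq.ne_zero_of_preconnected halvedCube_preconnected h0 h1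
  have hdvd : (b + c) / Nat.gcd b c ∣ 2 ^ (n - 1) := by
    have := Nat.add_div_gcd_dvd_add hb hEq.card_mul_eq_card_mul
    rwa [hEq.card_add_card, card_even_hammingDist_zero, Fintype.card_fin] at this
  obtain ⟨m, -, hm⟩ := (Nat.dvd_prime_pow Nat.prime_two).1 hdvd
  exact ⟨hdvd, m, hm⟩
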